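/- Let V = (A, δ, x_in) be a VAS, y ∈ ℕ_ω^d, and let V_y be the VAS over alphabet A ⊎ {b_1,...,b_d} where δ_y extends δ by δ_y(b_i) = 0 if y(i) < ω and δ_y(b_i) = −e_i if y(i) = ω. Define y_ℓ ∈ ℕ^d by y_ℓ(i) = y(i) if y(i) < ω and y_ℓ(i) = ℓ otherwise. Then y ∈ Lim Post*(V) if and only if y_ℓ ∈ Post*(V_y) for all ℓ ∈ ℕ. -/
import Mathlib


/-- Vectors over `ℕ∞ = ℕ ∪ {ω}`. -/
abbrev Vec (d : ℕ) := Fin d → ℕ∞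

/-- A sequence in `ℕ∞` converges to `l` if it is ultimately constant equal to `l`,
or its integer values form an infinite subsequence tending to infinity and `l = ω`. -/
def ConvTo (s : ℕ → ℕ∞) (l : ℕ∞) : Prop :=
  (∃ N, ∀ n ≥ N, s n = l) ∨
  (l = ⊤ ∧ {n | s n ≠ ⊤}.Infinite ∧ ∀ B : ℕ, ∃ N, ∀ n ≥ N, (B : ℕ∞) ≤ s n)

/-- Componentwise convergence of a sequence of vectors. -/
def VConvTo {d : ℕ} (s : ℕ → Vec d) (x : Vec d) : Prop :=
  ∀ i, ConvTo (fun n => s n i) (x i)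

/-- The limit closure: the set of limits of convergent sequences of elements of `M`. -/
def LimCl {d : ℕ} (M : Set (Vec d)) : Set (Vec d) :=
  {x | ∃ s : ℕ → Vec d, (∀ n, s n ∈ M) ∧ VConvTo s x}

/-- Downward closure for the pointwise order on `ℕ∞^d`. -/
def dc {d : ℕ} (M : Set (Vec d)) : Set (Vec d) := {x | ∃ y ∈ M, x ≤ y}

/-- The copy of `ℕ^d` inside `ℕ∞^d`. -/
def FinVec (d : ℕ) : Set (Vec d) := {x | ∀ i, x i ≠ ⊤}

/-- The embedding of `ℕ^d` into `ℕ∞^d`. -/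
def toOmega {d : ℕ} (x : Fin d → ℕ) : Vec d := fun i => (x i : ℕ∞)

/-- A vector addition system of dimension `d` over alphabet `α`. -/
structure VAS (α : Type) (d : ℕ) where
  δ : α → Fin d → ℤ
  init : Fin d → ℕ

/-- Displacement of a word: `δ` extended to a monoid morphism on words. -/
def wordδ {α : Type} {d : ℕ} (V : VAS α d) (w : List α) : Fin d → ℤ :=
  (w.map V.δ).sum

/-- A word is fireable from `x` if every intermediate state is nonnegative. -/
def Fireable {α : Type} {d : ℕ} (V : VAS α d) (x : Fin d → ℕ) (w : List α) : Prop :=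
  ∀ p, p <+: w → ∀ i, 0 ≤ (x i : ℤ) + wordδ V p i

/-- The reachability set of the VAS `V`. -/
def PostStar {α : Type} {d : ℕ} (V : VAS α d) : Set (Fin d → ℕ) :=
  {y | ∃ w : List α, Fireable V V.init w ∧ ∀ i, (y i : ℤ) = V.init i + wordδ V w i}

lemma wordδ_cons {α d} (V : VAS α d) (a : α) (w : List α) (i : Fin d) :
    wordδ V (a :: w) i = V.δ a i + wordδ V w i := by
  simp [wordδ, List.sum_cons]

lemma wordδ_append {α d} (V : VAS α d) (w1 w2 : List α) (i : Fin d) :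
    wordδ V (w1 ++ w2) i = wordδ V w1 i + wordδ V w2 i := by
  simp [wordδ, List.sum_append]

lemma prefix_filterMap {α β} (f : α → Option β) :
    ∀ {w : List α} {p' : List β}, p' <+: w.filterMap f →
      ∃ p, p <+: w ∧ p.filterMap f = p' := by
  intro w
  induction w with
  | nil => intro p' h; simp at h; exact ⟨[], List.nil_prefix, by simp [h]⟩
  | cons a w ih =>
    intro p' h
    cases hf : f a with
    | none =>
      rw [List.filterMap_cons, hf] at h
      obtain ⟨p, hp, he⟩ := ih h
      exact ⟨a :: p, List.cons_prefix_cons.mpr ⟨rfl, hp⟩, by simp [List.filterMap_cons, hf, he]⟩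
    | some b =>
      rw [List.filterMap_cons, hf] at h
      cases p' with
      | nil => exact ⟨[], List.nil_prefix, rfl⟩
      | cons c p' =>
        obtain ⟨hc, hp'⟩ := List.cons_prefix_cons.mp h
        obtain ⟨p, hp, he⟩ := ih hp'
        exact ⟨a :: p, List.cons_prefix_cons.mpr ⟨rfl, hp⟩,
          by simp [List.filterMap_cons, hf, he, hc]⟩

section Main
variable {α : Type} {d : ℕ} (V : VAS α d) (y : Vec d) (Vy : VAS (α ⊕ Fin d) d)
    (hδ : Vy.δ = Sum.elim V.δ
      (fun i j => if y i = ⊤ then (if j = i then (-1 : ℤ) else 0) else 0))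
    (hinit : Vy.init = V.init)

include hδ

lemma wordδ_map_inl (w : List α) : wordδ Vy (w.map Sum.inl) = wordδ V w := by
  simp only [wordδ, List.map_map, hδ]
  rfl

include hinit

lemma post_inl {x : Fin d → ℕ} (hx : x ∈ PostStar V) : x ∈ PostStar Vy := by
  obtain ⟨w, hf, he⟩ := hx
  refine ⟨w.map Sum.inl, ?_, ?_⟩
  · intro p hp i
    have hlen := List.prefix_iff_eq_take.mp hp
    rw [← List.map_take] at hlen
    rw [hlen, wordδ_map_inl V y Vy hδ, hinit]
    exact hf _ (List.take_prefix _ _) i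
  · intro i
    rw [hinit, wordδ_map_inl V y Vy hδ]
    exact he i

omit hδ hinit in
lemma wordδ_singleton {β : Type} (W : VAS β d) (a : β) (i : Fin d) :
    wordδ W [a] i = W.δ a i := by simp [wordδ]

lemma post_step {x : Fin d → ℕ} (hx : x ∈ PostStar Vy) (i : Fin d)
    (hyi : y i = ⊤) (hpos : 0 < x i) :
    Function.update x i (x i - 1) ∈ PostStar Vy := by
  obtain ⟨w, hf, he⟩ := hx
  have hδi : ∀ j, Vy.δ (Sum.inr i) j = if j = i then -1 else 0 := by
    intro j; rw [hδ]; simp [hyi]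
  refine ⟨w ++ [Sum.inr i], ?_, ?_⟩
  · intro p hp j
    rcases List.prefix_concat_iff.mp hp with h | h
    · subst h
      rw [wordδ_append, wordδ_singleton, hδi]
      have := he j
      by_cases hji : j = i
      · subst hji; simp only [if_true]; omega
      · simp only [if_neg hji]; omega
    · exact hf p h j
  · intro j
    rw [wordδ_append, wordδ_singleton, hδi]
    have := he j
    by_cases hji : j = i
    · subst hji
      simp only [Function.update_self, if_true]
      omega
    · simp only [Function.update_of_ne hji, if_neg hji]
      omega

lemma post_descend :
    ∀ n (x t : Fin d → ℕ), (∑ i, (x i - t i)) = n → x ∈ PostStar Vy →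
      (∀ i, t i ≤ x i) → (∀ i, y i ≠ ⊤ → t i = x i) → t ∈ PostStar Vy := by
  intro n
  induction n using Nat.strong_induction_on with
  | _ n ih =>
    intro x t hsum hx hle heq
    by_cases h0 : ∀ i, t i = x i
    · have : t = x := funext h0
      subst this; exact hx
    · push_neg at h0
      obtain ⟨i, hi⟩ := h0
      have hlt : t i < x i := lt_of_le_of_ne (hle i) hi
      have hyi : y i = ⊤ := by
        by_contra hc
        exact hi (heq i hc)
      set x' := Function.update x i (x i - 1) with hx'
      have hx'post := post_step V y Vy hδ hinit hx i hyi (by omega)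
      have hsum' : (∑ j, (x' j - t j)) < n := by
        rw [← hsum]
        apply Finset.sum_lt_sum
        · intro j _
          by_cases hji : j = i
          · subst hji; simp [hx', Function.update_self]; omega
          · simp [hx', Function.update_of_ne hji]
        · exact ⟨i, Finset.mem_univ i, by simp [hx', Function.update_self]; omega⟩
      refine ih _ hsum' x' t rfl hx'post ?_ ?_
      · intro j
        by_cases hji : j = i
        · subst hji; simp [hx', Function.update_self]; omega
        · simp [hx', Function.update_of_ne hji]; exact hle j
      · intro j hj
        by_cases hji : j = i
        · subst hji; exact absurd hyi hj
        · simp [hx', Function.update_of_ne hji]; exact heq j hj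

-- filter direction
omit hinit in
lemma filter_δ (w : List (α ⊕ Fin d)) (i : Fin d) :
    wordδ Vy w i ≤ wordδ V (w.filterMap Sum.getLeft?) i ∧
      (y i ≠ ⊤ → wordδ Vy w i = wordδ V (w.filterMap Sum.getLeft?) i) := by
  induction w with
  | nil => simp [wordδ]
  | cons a w ih =>
    cases a with
    | inl a =>
      simp only [List.filterMap_cons, Sum.getLeft?, wordδ_cons]
      constructor
      · have := ih.1
        simp only [hδ, Sum.elim_inl]
        omega
      · intro h
        have := ih.2 h
        simp only [hδ, Sum.elim_inl]
        omega
    | inr k =>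
      simp only [List.filterMap_cons, Sum.getLeft?, wordδ_cons]
      have hk : Vy.δ (Sum.inr k) i ≤ 0 := by
        simp only [hδ, Sum.elim_inr]
        split <;> [skip; omega]
        split <;> omega
      constructor
      · have := ih.1; omega
      · intro h
        have hk0 : Vy.δ (Sum.inr k) i = 0 := by
          simp only [hδ, Sum.elim_inr]
          by_cases hyk : y k = ⊤
          · simp only [hyk, if_true]
            have : i ≠ k := by rintro rfl; exact h hyk
            simp [this]
          · simp [hyk]
        have := ih.2 h
        omega

lemma post_filter {x : Fin d → ℕ} (hx : x ∈ PostStar Vy) :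
    ∃ z : Fin d → ℕ, z ∈ PostStar V ∧ (∀ i, x i ≤ z i) ∧ (∀ i, y i ≠ ⊤ → z i = x i) := by
  obtain ⟨w, hf, he⟩ := hx
  have key : ∀ i, 0 ≤ (V.init i : ℤ) + wordδ V (w.filterMap Sum.getLeft?) i := by
    intro i
    have h1 := hf w (List.prefix_refl w) i
    rw [hinit] at h1
    have h2 := (filter_δ V y Vy hδ w i).1
    omega
  refine ⟨fun i => ((V.init i : ℤ) + wordδ V (w.filterMap Sum.getLeft?) i).toNat,
    ⟨w.filterMap Sum.getLeft?, ?_, ?_⟩, ?_, ?_⟩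
  · intro p' hp' i
    obtain ⟨p, hp, hpe⟩ := prefix_filterMap Sum.getLeft? hp'
    have h1 := hf p hp i
    rw [hinit] at h1
    have h2 := (filter_δ V y Vy hδ p i).1
    rw [hpe] at h2
    omega
  · intro i
    beta_reduce
    rw [Int.toNat_of_nonneg (key i)]
  · intro i
    beta_reduce
    have h1 := he i; rw [hinit] at h1
    have h2 := (filter_δ V y Vy hδ w i).1
    omega
  · intro i hi
    beta_reduce
    have h1 := he i; rw [hinit] at h1
    have h2 := (filter_δ V y Vy hδ w i).2 hi
    omega

end Main

/-- Let `V_y` extend `V` by fresh actions `b_1, …, b_d` with `δ_y(b_i) = 0` if `y(i) < ω`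
and `δ_y(b_i) = -e_i` if `y(i) = ω`, and let `y_ℓ` agree with `y` on finite components and
equal `ℓ` on `ω`-components. Then `y ∈ Lim Post*(V)` iff `y_ℓ ∈ Post*(V_y)` for all `ℓ`. -/
theorem stmt_10 {α : Type} [Finite α] {d : ℕ} (V : VAS α d) (y : Vec d)
    (Vy : VAS (α ⊕ Fin d) d)
    (hδ : Vy.δ = Sum.elim V.δ
      (fun i j => if y i = ⊤ then (if j = i then (-1 : ℤ) else 0) else 0))
    (hinit : Vy.init = V.init)
    (yl : ℕ → Fin d → ℕ)
    (hyl : ∀ (ℓ : ℕ) (i : Fin d), (yl ℓ i : ℕ∞) = if y i = ⊤ then (ℓ : ℕ∞) else y i) :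
    y ∈ LimCl (toOmega '' PostStar V) ↔ ∀ ℓ : ℕ, yl ℓ ∈ PostStar Vy := by
  constructor
  · rintro ⟨s, hs, hconv⟩ ℓ
    have hN : ∀ i : Fin d, ∃ N, ∀ n ≥ N,
        (if y i = ⊤ then (ℓ : ℕ∞) ≤ s n i else s n i = y i) := by
      intro i
      by_cases hyi : y i = ⊤
      · rcases hconv i with ⟨N, hNc⟩ | ⟨-, -, hB⟩
        · exfalso
          obtain ⟨x, -, hx⟩ := hs N
          have h1 : s N i = y i := hNc N le_rfl
          rw [← hx, hyi] at h1
          simp only [toOmega] at h1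
          exact WithTop.coe_ne_top h1
        · obtain ⟨N, hNc⟩ := hB ℓ
          exact ⟨N, fun n hn => by rw [if_pos hyi]; exact hNc n hn⟩
      · rcases hconv i with ⟨N, hNc⟩ | ⟨htop, -, -⟩
        · exact ⟨N, fun n hn => by rw [if_neg hyi]; exact hNc n hn⟩
        · exact absurd htop hyi
    choose N hNs using hN
    set M := Finset.univ.sup N with hM
    obtain ⟨x, hxpost, hxeq⟩ := hs M
    have hprop : ∀ i, if y i = ⊤ then ℓ ≤ x i else (x i : ℕ∞) = y i := by
      intro i
      have h1 := hNs i M (Finset.le_sup (Finset.mem_univ i))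
      rw [← hxeq] at h1
      simp only [toOmega] at h1
      by_cases hyi : y i = ⊤
      · rw [if_pos hyi] at h1 ⊢
        exact_mod_cast h1
      · rw [if_neg hyi] at h1 ⊢
        exact h1
    have hle : ∀ i, yl ℓ i ≤ x i := by
      intro i
      have h1 := hprop i
      have h2 := hyl ℓ i
      by_cases hyi : y i = ⊤
      · rw [if_pos hyi] at h1 h2
        have : yl ℓ i = ℓ := by exact_mod_cast h2
        omega
      · rw [if_neg hyi] at h1 h2
        rw [← h1] at h2
        have : yl ℓ i = x i := by exact_mod_cast h2
        omega
    have heq : ∀ i, y i ≠ ⊤ → yl ℓ i = x i := by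
      intro i hyi
      have h1 := hprop i
      have h2 := hyl ℓ i
      rw [if_neg hyi] at h1 h2
      rw [← h1] at h2
      exact_mod_cast h2
    exact post_descend V y Vy hδ hinit _ x (yl ℓ) rfl
      (post_inl V y Vy hδ hinit hxpost) hle heq
  · intro h
    have hz : ∀ n : ℕ, ∃ z, z ∈ PostStar V ∧ (∀ i, yl n i ≤ z i) ∧
        (∀ i, y i ≠ ⊤ → z i = yl n i) :=
      fun n => post_filter V y Vy hδ hinit (h n)
    choose z hzpost hzge hzeq using hz
    refine ⟨fun n => toOmega (z n), fun n => ⟨z n, hzpost n, rfl⟩, ?_⟩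
    intro i
    by_cases hyi : y i = ⊤
    · right
      refine ⟨hyi, ?_, ?_⟩
      · have huniv : {n : ℕ | toOmega (z n) i ≠ ⊤} = Set.univ := by
          ext n
          simp [toOmega]
        rw [huniv]
        exact Set.infinite_univ
      · intro B
        refine ⟨B, fun n hn => ?_⟩
        have h1 : yl n i = n := by
          have h2 := hyl n i
          rw [if_pos hyi] at h2
          exact_mod_cast h2
        have h3 : B ≤ z n i := by
          have h4 := hzge n i
          omega
        show (B : ℕ∞) ≤ (z n i : ℕ∞)
        exact_mod_cast h3
    · left
      refine ⟨0, fun n _ => ?_⟩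
      show (z n i : ℕ∞) = y i
      rw [hzeq n i hyi]
      have h2 := hyl n i
      rw [if_neg hyi] at h2
      exact h2
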